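/- arXiv:2204.13764 — 7 statements merged into one kernel-verified Lean document; each statement's English description precedes it below -/
import Mathlib

section
/- Let n ≥ 1 and let π be a 321-avoiding permutation of {1,…,n} which is not the identity. Let i_1 < i_2 < ⋯ < i_r be all the excedance locations of π. Then the number of fixed points of π equals (i_1 − 1) + Σ_{j=2}^{r} max{i_j − π(i_{j−1}) − 1, 0} + (n − π(i_r)). -/
/-!
For a 321-avoiding permutation `π`, a point `x` is fixed exactly when no excedance `a` has
`a ≤ x ≤ π a`: a fixed point strictly under such an arc would, since `π` must send some later
point below `x`, complete a 321 pattern, while a point with `π x < x` lies under the arc of some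
earlier point sent to at least `x`.  The same counting shows that the excedance values increase
with the locations, so the points under no arc are exactly the gaps before the first arc, between
consecutive arcs and after the last one, whose sizes are the summands of the formula.
-/

/-- A permutation `π` of `{1,…,n}` (modeled as `Fin n`, so that the index `i ∈ {1,…,n}`
corresponds to the element of `Fin n` with value `i - 1`) is 321-avoiding if there are no
indices `i < j < k` with `π k < π j < π i`. -/
def Avoids321 {n : ℕ} (π : Equiv.Perm (Fin n)) : Prop :=
  ∀ i j k : Fin n, i < j → j < k → ¬(π k < π j ∧ π j < π i)

theorem Equiv.Perm.exists_not_apply_of_apply_not {α : Type*} [Finite α] (π : Equiv.Perm α)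
    {p : α → Prop} {a : α} (ha : p a) (hπa : ¬p (π a)) : ∃ b, ¬p b ∧ p (π b) := by
  by_contra! h
  simpa [ha] using Equiv.Perm.perm_symm_on_of_perm_on_finite (p := fun x => ¬p x) h hπa

open Finset

section Interval

variable {α : Type*} [LinearOrder α] {r : ℕ} {ι f : Fin (r + 1) → α}

theorem forall_notMem_Icc_iff (hι : Monotone ι) (hf : Monotone f) (x : α) :
    (∀ j, x ∉ Set.Icc (ι j) (f j)) ↔
      x < ι 0 ∨ (∃ j : Fin r, f j.castSucc < x ∧ x < ι j.succ) ∨ f (Fin.last r) < x := by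
  constructor
  · intro hx
    by_contra! hgap
    obtain ⟨h0, hmid, hlast⟩ := hgap
    have hle : ∀ j, ι j ≤ x := by
      refine Fin.induction h0 fun j hj => hmid j ?_
      by_contra! hfx
      exact hx _ ⟨hj, hfx⟩
    exact hx _ ⟨hle _, hlast⟩
  · rintro (h0 | ⟨j, hfj, hιj⟩ | hlast) k ⟨hιk, hfk⟩
    · exact (h0.trans_le (hι (Fin.zero_le k))).not_ge hιk
    · rcases le_or_gt k j.castSucc with hk | hk
      · exact ((hf hk).trans_lt hfj).not_ge hfk
      · exact (hι (Fin.castSucc_lt_iff_succ_le.mp hk)).not_gt (hιk.trans_lt hιj)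
    · exact ((hf (Fin.le_last k)).trans_lt hlast).not_ge hfk

end Interval

theorem Fin.card_filter_gaps {n r : ℕ} {ι f : Fin (r + 1) → Fin n} (hι : Monotone ι)
    (hιf : ∀ j, ι j ≤ f j) :
    #{x | x < ι 0 ∨ (∃ j : Fin r, f j.castSucc < x ∧ x < ι j.succ) ∨ f (Fin.last r) < x} =
      (ι 0 : ℕ) + ∑ j : Fin r, ((ι j.succ : ℕ) - ((f j.castSucc : ℕ) + 1))
        + (n - ((f (Fin.last r) : ℕ) + 1)) := by
  set gaps := fun j : Fin r => Ioo (f j.castSucc) (ι j.succ)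
  have hfilter : ({x | x < ι 0 ∨ (∃ j : Fin r, f j.castSucc < x ∧ x < ι j.succ) ∨
      f (Fin.last r) < x} : Finset (Fin n)) =
      Iio (ι 0) ∪ univ.biUnion gaps ∪ Ioi (f (Fin.last r)) := by
    ext x
    simp [gaps]
  have hdisj : ((univ : Finset (Fin r)) : Set (Fin r)).PairwiseDisjoint gaps := by
    refine ((pairwise_disjoint_on gaps).mpr fun p q hpq => disjoint_left.mpr fun y hp hq => ?_)
      |>.set_pairwise _
    have hpq : ι p.succ ≤ f q.castSucc := (hι (Fin.succ_le_castSucc_iff.mpr hpq)).trans (hιf _)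
    exact ((mem_Ioo.mp hp).2.trans_le hpq).not_gt (mem_Ioo.mp hq).1
  have hdisj_first : Disjoint (Iio (ι 0)) (univ.biUnion gaps) := by
    simp only [disjoint_left, mem_Iio, mem_biUnion, mem_univ, true_and, not_exists]
    intro y hy j hj
    exact (((hι (Fin.zero_le _)).trans (hιf _)).trans_lt (mem_Ioo.mp hj).1).not_gt hy
  have hdisj_last : Disjoint (Iio (ι 0) ∪ univ.biUnion gaps) (Ioi (f (Fin.last r))) := by
    simp only [disjoint_right, mem_Ioi, mem_union, mem_Iio, mem_biUnion, mem_univ, true_and,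
      not_or, not_exists]
    intro y hy
    have hy : ι (Fin.last r) < y := (hιf _).trans_lt hy
    exact ⟨fun h0 => (h0.trans_le (hι (Fin.zero_le _))).not_gt hy,
      fun j hj => ((mem_Ioo.mp hj).2.trans_le (hι (Fin.le_last _))).not_gt hy⟩
  rw [hfilter, card_union_of_disjoint hdisj_last, card_union_of_disjoint hdisj_first,
    card_biUnion hdisj, Fin.card_Iio, Fin.card_Ioi]
  simp only [gaps, Fin.card_Ioo, Nat.sub_sub]
  omega

namespace Avoids321

variable {n : ℕ} {π : Equiv.Perm (Fin n)}

theorem apply_lt_apply_of_lt (h321 : Avoids321 π) {i a : Fin n} (hia : i < a) (ha : a < π a) :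
    π i < π a := by
  obtain ⟨b, hab, hba⟩ := π.exists_not_apply_of_apply_not (p := (· ≤ a)) le_rfl ha.not_ge
  refine (lt_or_gt_of_ne (π.injective.ne hia.ne)).resolve_right fun hai => ?_
  exact h321 i a b hia (not_le.mp hab) ⟨hba.trans_lt ha, hai⟩

theorem apply_eq_self_iff (h321 : Avoids321 π) (x : Fin n) :
    π x = x ↔ ∀ a, a < π a → x ∉ Set.Icc a (π a) := by
  constructor
  · rintro hx a ha ⟨hax, hxa⟩
    have hax : a < x := hax.lt_of_ne fun h => (h ▸ ha).ne' hx
    have hxa : x < π a := hxa.lt_of_ne fun h => hax.ne (π.injective (hx.trans h).symm)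
    obtain ⟨b, hxb, hbx⟩ := π.exists_not_apply_of_apply_not (p := (· < x)) hax hxa.not_gt
    have hxb : x < b := (not_lt.mp hxb).lt_of_ne fun h => by subst h; exact hbx.ne hx
    exact h321 a x b hax hxb ⟨by rwa [hx], by rwa [hx]⟩
  · intro hx
    by_contra hne
    rcases lt_or_gt_of_ne hne with hlt | hgt
    · obtain ⟨i, hix, hxi⟩ := π.exists_not_apply_of_apply_not (p := (x ≤ ·)) le_rfl hlt.not_ge
      exact hx i ((not_le.mp hix).trans_le hxi) ⟨(not_le.mp hix).le, hxi⟩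
    · exact hx x hgt ⟨le_rfl, hgt.le⟩

end Avoids321

theorem stmt1_general (n r : ℕ) (π : Equiv.Perm (Fin n)) (h321 : Avoids321 π)
    (ι : Fin (r + 1) → Fin n) (hmono : StrictMono ι)
    (hexc : ∀ x : Fin n, x < π x ↔ ∃ j, ι j = x) :
    Nat.card {x : Fin n // π x = x} =
      (ι 0 : ℕ)
        + ∑ j : Fin r, ((ι j.succ : ℕ) - ((π (ι j.castSucc) : ℕ) + 1))
        + (n - ((π (ι (Fin.last r)) : ℕ) + 1)) := by
  have hexcι : ∀ j, ι j < π (ι j) := fun j => (hexc _).mpr ⟨j, rfl⟩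
  have hπι : Monotone (π ∘ ι) := StrictMono.monotone fun j k hjk =>
    h321.apply_lt_apply_of_lt (hmono hjk) (hexcι k)
  have hfix : ∀ x, π x = x ↔ x < ι 0 ∨ (∃ j : Fin r, π (ι j.castSucc) < x ∧ x < ι j.succ) ∨
      π (ι (Fin.last r)) < x := by
    intro x
    rw [h321.apply_eq_self_iff]
    refine Iff.trans ?_ (forall_notMem_Icc_iff hmono.monotone hπι x)
    simp only [hexc, forall_exists_index, forall_apply_eq_imp_iff, Function.comp_apply]
  rw [Nat.card_eq_fintype_card, Fintype.card_subtype, filter_congr fun x _ => hfix x]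
  exact Fin.card_filter_gaps (f := π ∘ ι) hmono.monotone fun j => (hexcι j).le

/-- Let `π` be a 321-avoiding permutation of `{1,…,n}` (so `1 ≤ n`), not the identity, and let
`i_1 < i_2 < ⋯ < i_{r+1}` (here `ι 0, …, ι (Fin.last r)`, with `r + 1 ≥ 1`) be all its
excedance locations.  Then the number of fixed points of `π` equals
`(i_1 − 1) + Σ_{j=2}^{r+1} max{i_j − π(i_{j−1}) − 1, 0} + (n − π(i_{r+1}))`.
In the 0-based model `Fin n`, the 1-based quantity `i_1 − 1` is `(ι 0 : ℕ)`, the 1-based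
quantity `i_j − π(i_{j−1}) − 1` is `(ι j.succ : ℕ) - ((π (ι j.castSucc) : ℕ) + 1)` (truncated
subtraction on `ℕ` realizes the `max{·, 0}`), and the 1-based quantity `n − π(i_{r+1})` is
`n - ((π (ι (Fin.last r)) : ℕ) + 1)`. -/
theorem stmt1 (n r : ℕ) (hn : 1 ≤ n) (π : Equiv.Perm (Fin n)) (h321 : Avoids321 π)
    (hne : π ≠ 1)
    (ι : Fin (r + 1) → Fin n) (hmono : StrictMono ι)
    (hexc : ∀ x : Fin n, x < π x ↔ ∃ j, ι j = x) :
    Nat.card {x : Fin n // π x = x} =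
      (ι 0 : ℕ)
        + ∑ j : Fin r, ((ι j.succ : ℕ) - ((π (ι j.castSucc) : ℕ) + 1))
        + (n - ((π (ι (Fin.last r)) : ℕ) + 1)) :=
  stmt1_general n r π h321 ι hmono hexc
end

section
/- Let n ≥ 1 and let π be a 321-avoiding permutation of {1,…,n}. Let i < i' be two excedance locations of π such that no index strictly between i and i' is an excedance location. Then the number of fixed points x of π with i < x < i' equals max{i' − π(i) − 1, 0}. -/
namespace Stmt2Aux

variable {n : ℕ} (π : Equiv.Perm (Fin n))

lemma card_filter_lt (v : Fin n) :
    (Finset.univ.filter (fun k => π k < v)).card = (v : ℕ) := by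
  have h : Finset.univ.filter (fun k => π k < v) = (Finset.Iio v).image π.symm := by
    ext k
    simp only [Finset.mem_filter, Finset.mem_univ, true_and, Finset.mem_image,
      Finset.mem_Iio]
    constructor
    · intro h; exact ⟨π k, h, π.symm_apply_apply k⟩
    · rintro ⟨w, hw, rfl⟩; simpa using hw
  rw [h, Finset.card_image_of_injective _ π.symm.injective, Fin.card_Iio]

/-- Pigeonhole: if `π i > i` then some later position carries a smaller value. -/
lemma exists_smaller_after {i : Fin n} (h : i < π i) :
    ∃ k : Fin n, i < k ∧ π k < π i := by
  by_contra hc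
  push_neg at hc
  have hsub : Finset.univ.filter (fun k => π k < π i) ⊆ Finset.Iio i := by
    intro k hk
    simp only [Finset.mem_filter, Finset.mem_univ, true_and] at hk
    simp only [Finset.mem_Iio]
    rcases lt_trichotomy k i with h1 | rfl | h1
    · exact h1
    · exact absurd hk (lt_irrefl _)
    · exact absurd hk (not_lt.mpr (hc k h1))
  have hcard := Finset.card_le_card hsub
  rw [card_filter_lt, Fin.card_Iio] at hcard
  have := Fin.lt_def.mp h
  omega

/-- Pigeonhole: if some position after `i'` carries a value below `i'`, then some
position before `i'` carries a value at least `i'`. -/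
lemma exists_big_before {i' y : Fin n} (hy : (i' : ℕ) < (y : ℕ)) (hval : (π y : ℕ) < (i' : ℕ)) :
    ∃ a : Fin n, (a : ℕ) < (i' : ℕ) ∧ (i' : ℕ) ≤ (π a : ℕ) := by
  by_contra hc
  push_neg at hc
  have hsub : Finset.Iio i' ⊆ Finset.univ.filter (fun k => π k < i') := by
    intro a ha
    simp only [Finset.mem_Iio] at ha
    simp only [Finset.mem_filter, Finset.mem_univ, true_and]
    exact Fin.lt_def.mpr (hc a (Fin.lt_def.mp ha))
  have he : Finset.Iio i' = Finset.univ.filter (fun k => π k < i') :=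
    Finset.eq_of_subset_of_card_le hsub (by rw [card_filter_lt, Fin.card_Iio])
  have hy' : y ∈ Finset.univ.filter (fun k => π k < i') := by
    simp only [Finset.mem_filter, Finset.mem_univ, true_and]
    exact Fin.lt_def.mpr hval
  rw [← he, Finset.mem_Iio] at hy'
  have := Fin.lt_def.mp hy'
  omega

/-- Pigeonhole: if `x` is a fixed point, `i < x`, and `x < π i`, then some position
after `x` carries a value below `x`. -/
lemma exists_small_after {i x : Fin n} (hix : i < x) (hfix : π x = x)
    (hxpi : (x : ℕ) < (π i : ℕ)) :
    ∃ k : Fin n, x < k ∧ π k < x := by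
  by_contra hc
  push_neg at hc
  have hsub : Finset.univ.filter (fun k => π k < x) ⊆ (Finset.Iio x).erase i := by
    intro k hk
    simp only [Finset.mem_filter, Finset.mem_univ, true_and] at hk
    have hki : k ≠ i := by
      rintro rfl
      have := Fin.lt_def.mp hk
      omega
    have hkx : k < x := by
      rcases lt_trichotomy k x with h1 | rfl | h1
      · exact h1
      · rw [hfix] at hk; exact absurd hk (lt_irrefl _)
      · exact absurd hk (not_lt.mpr (hc k h1))
    exact Finset.mem_erase.mpr ⟨hki, Finset.mem_Iio.mpr hkx⟩
  have hcard := Finset.card_le_card hsub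
  rw [card_filter_lt] at hcard
  have hmem : i ∈ Finset.Iio x := Finset.mem_Iio.mpr hix
  rw [Finset.card_erase_of_mem hmem, Fin.card_Iio] at hcard
  have := Fin.lt_def.mp hix
  omega

/-- Every position strictly between `π i` and `i'` is a fixed point. -/
lemma fix_of_between (h321 : Avoids321 π)
    (i i' : Fin n) (hi : i < π i) (hi' : i' < π i')
    (hbetween : ∀ x : Fin n, i < x → x < i' → ¬ x < π x) :
    ∀ m : ℕ, ∀ x : Fin n, (i' : ℕ) - (x : ℕ) ≤ m → (π i : ℕ) < (x : ℕ) →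
      (x : ℕ) < (i' : ℕ) → π x = x := by
  intro m
  induction m with
  | zero => intro x h1 h2 h3; omega
  | succ m ih =>
    intro x h1 h2 h3
    have hival := Fin.lt_def.mp hi
    have hi'val := Fin.lt_def.mp hi'
    have hyx : π (π.symm x) = x := π.apply_symm_apply x
    set y := π.symm x with hy
    rcases lt_trichotomy (y : ℕ) (x : ℕ) with hlt | heq | hgt
    · -- the preimage of `x` is before `x`
      rcases lt_trichotomy (y : ℕ) (i : ℕ) with h4 | h4 | h4
      · -- y < i : 321 pattern (y, i, k)
        obtain ⟨k, hk1, hk2⟩ := exists_smaller_after π hi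
        exact absurd ⟨hk2, by rw [hyx]; exact Fin.lt_def.mpr h2⟩
          (h321 y i k (Fin.lt_def.mpr h4) hk1)
      · -- y = i : then π i = x, contradicting π i < x
        have : y = i := Fin.ext h4
        rw [this] at hyx
        have := congrArg Fin.val hyx
        omega
      · -- i < y < x : y would be an excedance strictly between i and i'
        exact absurd (Fin.lt_def.mpr (hyx ▸ hlt : (y : ℕ) < (π y : ℕ)))
          (hbetween y (Fin.lt_def.mpr h4) (Fin.lt_def.mpr (by omega)))
    · -- y = x : x is fixed
      have : y = x := Fin.ext heq
      rw [this] at hyx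
      exact hyx
    · -- the preimage of `x` is after `x`
      rcases lt_trichotomy (y : ℕ) (i' : ℕ) with h4 | h4 | h4
      · -- x < y < i' : by induction y is fixed, but π y = x ≠ y
        have hfy : π y = y := ih y (by omega) (by omega) h4
        rw [hyx] at hfy
        have := congrArg Fin.val hfy
        omega
      · -- y = i' : π i' = x < i', contradicting i' < π i'
        have : y = i' := Fin.ext h4
        rw [this] at hyx
        have := congrArg Fin.val hyx
        omega
      · -- y > i' : some value ≥ i' sits at a position a < i'
        have hval : (π y : ℕ) < (i' : ℕ) := by rw [hyx]; omega
        obtain ⟨a, ha1, ha2⟩ := exists_big_before π h4 hval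
        rcases lt_trichotomy (a : ℕ) (i : ℕ) with h5 | h5 | h5
        · -- a < i : 321 pattern (a, i, k)
          obtain ⟨k, hk1, hk2⟩ := exists_smaller_after π hi
          exact absurd ⟨hk2, Fin.lt_def.mpr (by omega)⟩
            (h321 a i k (Fin.lt_def.mpr h5) hk1)
        · -- a = i : π i ≥ i' > x > π i, contradiction
          have : a = i := Fin.ext h5
          rw [this] at ha2
          omega
        · -- i < a < i' : a would be an excedance strictly between i and i'
          exact absurd (Fin.lt_def.mpr (by omega : (a : ℕ) < (π a : ℕ)))
            (hbetween a (Fin.lt_def.mpr h5) (Fin.lt_def.mpr ha1))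

end Stmt2Aux

/-- Let `π` be a 321-avoiding permutation of `{1,…,n}` and let `i < i'` be two excedance
locations of `π` (`π i > i`, `π i' > i'`) with no excedance location strictly between them.
Then the number of fixed points `x` of `π` with `i < x < i'` equals `max{i' − π(i) − 1, 0}`.
In the 0-based model `Fin n` the 1-based quantity `i' − π(i) − 1` is
`(i' : ℕ) - ((π i : ℕ) + 1)`, and truncated subtraction on `ℕ` realizes the `max{·, 0}`. -/
theorem stmt2 (n : ℕ) (hn : 1 ≤ n) (π : Equiv.Perm (Fin n)) (h321 : Avoids321 π)
    (i i' : Fin n) (hlt : i < i') (hi : i < π i) (hi' : i' < π i')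
    (hbetween : ∀ x : Fin n, i < x → x < i' → ¬ x < π x) :
    Nat.card {x : Fin n // i < x ∧ x < i' ∧ π x = x} =
      (i' : ℕ) - ((π i : ℕ) + 1) := by
  have hival := Fin.lt_def.mp hi
  have hiff : ∀ x : Fin n, (i < x ∧ x < i' ∧ π x = x) ↔ (π i < x ∧ x < i') := by
    intro x
    constructor
    · rintro ⟨h1, h2, h3⟩
      refine ⟨?_, h2⟩
      rcases lt_trichotomy ((π i : Fin n) : ℕ) ((x : ℕ)) with h | h | h
      · exact Fin.lt_def.mpr h
      · exfalso
        have hxi : x = i := π.injective (by rw [h3]; exact (Fin.ext h.symm))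
        have := Fin.lt_def.mp h1
        rw [hxi] at this
        omega
      · exfalso
        obtain ⟨k, hk1, hk2⟩ := Stmt2Aux.exists_small_after π h1 h3 h
        refine (h321 i x k h1 hk1) ⟨by rw [h3]; exact hk2, ?_⟩
        rw [h3]; exact Fin.lt_def.mpr h
    · rintro ⟨h1, h2⟩
      have h1v := Fin.lt_def.mp h1
      have h2v := Fin.lt_def.mp h2
      refine ⟨Fin.lt_def.mpr (by omega), h2, ?_⟩
      exact Stmt2Aux.fix_of_between π h321 i i' hi hi' hbetween ((i' : ℕ) - (x : ℕ)) x
        le_rfl h1v h2v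
  rw [Nat.card_eq_fintype_card, Fintype.card_subtype]
  have hset : Finset.univ.filter (fun x => i < x ∧ x < i' ∧ π x = x) =
      Finset.Ioo (π i) i' := by
    ext x
    simp only [Finset.mem_filter, Finset.mem_univ, true_and, Finset.mem_Ioo]
    exact hiff x
  rw [hset, Fin.card_Ioo]
  omega
end

section
/- Let n ≥ 1 and let π be a 321-avoiding permutation of {1,…,n} which is not the identity, with excedance locations i_1 < i_2 < ⋯ < i_r. Then the cardinality of the connectivity set of π equals i_1 + Σ_{j=2}^{r} max{i_j − π(i_{j−1}), 0} + (n − π(i_r)). -/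
/-- The connectivity set of a permutation of `{1,…,n}` is the set of indices `i` such that
`π k < i` for every `k < i`.  In the 0-based model `Fin n` (the 1-based index `i` corresponds
to the element `x` of value `i - 1`), the condition becomes `π k < x` for every `k < x`. -/
def ConnectivitySet {n : ℕ} (π : Equiv.Perm (Fin n)) : Set (Fin n) :=
  {x : Fin n | ∀ k : Fin n, k < x → π k < x}

/-- Let `π` be a 321-avoiding permutation of `{1,…,n}` (so `1 ≤ n`), not the identity, with
excedance locations `i_1 < ⋯ < i_{r+1}` (here `ι 0, …, ι (Fin.last r)`, with `r + 1 ≥ 1`).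
Then the cardinality of the connectivity set of `π` equals
`i_1 + Σ_{j=2}^{r+1} max{i_j − π(i_{j−1}), 0} + (n − π(i_{r+1}))`.
In the 0-based model, the 1-based quantity `i_1` is `(ι 0 : ℕ) + 1`, the 1-based quantity
`i_j − π(i_{j−1})` is `(ι j.succ : ℕ) - (π (ι j.castSucc) : ℕ)` (truncated subtraction on `ℕ`
realizes the `max{·, 0}`), and `n − π(i_{r+1})` is `n - ((π (ι (Fin.last r)) : ℕ) + 1)`. -/
theorem stmt4 (n r : ℕ) (hn : 1 ≤ n) (π : Equiv.Perm (Fin n)) (h321 : Avoids321 π)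
    (hne : π ≠ 1)
    (ι : Fin (r + 1) → Fin n) (hmono : StrictMono ι)
    (hexc : ∀ x : Fin n, x < π x ↔ ∃ j, ι j = x) :
    Nat.card (ConnectivitySet π) =
      ((ι 0 : ℕ) + 1)
        + ∑ j : Fin r, ((ι j.succ : ℕ) - (π (ι j.castSucc) : ℕ))
        + (n - ((π (ι (Fin.last r)) : ℕ) + 1)) := by
  classical
  -- every `ι j` is an excedance
  have hexcι : ∀ j : Fin (r + 1), ι j < π (ι j) := fun j => (hexc (ι j)).mpr ⟨j, rfl⟩
  -- non-excedance positions satisfy `π p ≤ p`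
  have hnon : ∀ p : Fin n, (¬ ∃ j, ι j = p) → π p ≤ p := by
    intro p hp
    by_contra h
    exact hp ((hexc p).mp (not_le.mp h))
  -- excedance values are increasing (this uses 321-avoidance)
  have hb : StrictMono (fun j : Fin (r + 1) => π (ι j)) := by
    intro j k hjk
    by_contra hcon
    have hne2 : π (ι k) < π (ι j) := by
      refine lt_of_le_of_ne (not_lt.mp hcon) ?_
      intro h
      exact (ne_of_gt hjk) (hmono.injective (π.injective h))
    have hk' : ι k < π (ι k) := hexcι k
    have hex : ∃ c : Fin n, ι k < c ∧ π c < π (ι k) := by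
      by_contra hc
      push_neg at hc
      have hsub : (Finset.univ.filter (fun p => π p < π (ι k))) ⊆ Finset.Iio (ι k) := by
        intro p hp
        rw [Finset.mem_filter] at hp
        rw [Finset.mem_Iio]
        rcases lt_trichotomy p (ι k) with h | h | h
        · exact h
        · exact absurd hp.2 (by rw [h]; exact lt_irrefl _)
        · exact absurd hp.2 (not_lt.mpr (hc p h))
      have hcard1 : (Finset.univ.filter (fun p => π p < π (ι k))).card = ((π (ι k)) : ℕ) := by
        have hmap : Finset.univ.filter (fun p => π p < π (ι k))
            = (Finset.Iio (π (ι k))).map π.symm.toEmbedding := by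
          ext p
          simp only [Finset.mem_filter, Finset.mem_univ, true_and, Finset.mem_map,
            Finset.mem_Iio, Equiv.coe_toEmbedding]
          constructor
          · intro h; exact ⟨π p, h, π.symm_apply_apply p⟩
          · rintro ⟨q, hq, rfl⟩; simpa using hq
        rw [hmap, Finset.card_map, Fin.card_Iio]
      have hcard2 := Finset.card_le_card hsub
      rw [hcard1, Fin.card_Iio] at hcard2
      have := Fin.lt_def.mp hk'
      omega
    obtain ⟨c, hc1, hc2⟩ := hex
    exact h321 (ι j) (ι k) c (hmono hjk) hc1 ⟨hc2, hne2⟩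
  -- the target finset
  set F : Finset (Fin n) :=
    (Finset.Iic (ι 0)
      ∪ Finset.univ.biUnion (fun j : Fin r => Finset.Ioc (π (ι j.castSucc)) (ι j.succ)))
      ∪ Finset.Ioi (π (ι (Fin.last r))) with hF
  -- membership characterization
  have hmem : ∀ x : Fin n, x ∈ ConnectivitySet π ↔ x ∈ F := by
    intro x
    constructor
    · intro hx
      by_cases h0 : x ≤ ι 0
      · exact Finset.mem_union_left _ (Finset.mem_union_left _ (Finset.mem_Iic.mpr h0))
      push_neg at h0
      -- largest index with ι m < x
      have hsne : (Finset.univ.filter (fun j : Fin (r + 1) => ι j < x)).Nonempty :=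
        ⟨0, by simp [h0]⟩
      set m := (Finset.univ.filter (fun j : Fin (r + 1) => ι j < x)).max' hsne with hm
      have hmmem := (Finset.univ.filter (fun j : Fin (r + 1) => ι j < x)).max'_mem hsne
      rw [Finset.mem_filter] at hmmem
      have hmlt : ι m < x := hmmem.2
      have hbm : π (ι m) < x := hx (ι m) hmlt
      by_cases hml : m = Fin.last r
      · refine Finset.mem_union_right _ (Finset.mem_Ioi.mpr ?_)
        rw [← hml]; exact hbm
      · have hmr : (m : ℕ) < r := by
          have := Fin.lt_last_iff_ne_last.mpr hml
          exact Fin.lt_def.mp this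
        set j : Fin r := ⟨m, hmr⟩ with hj
        have hcs : j.castSucc = m := by
          apply Fin.ext; simp [hj]
        have hxle : x ≤ ι j.succ := by
          by_contra hxx
          push_neg at hxx
          have : j.succ ∈ Finset.univ.filter (fun j : Fin (r + 1) => ι j < x) := by
            simp [hxx]
          have hle := Finset.le_max' _ _ this
          rw [← hm] at hle
          have : (j.succ : ℕ) ≤ (m : ℕ) := hle
          simp [Fin.val_succ, hj] at this
        refine Finset.mem_union_left _ (Finset.mem_union_right _ ?_)
        refine Finset.mem_biUnion.mpr ⟨j, Finset.mem_univ _, Finset.mem_Ioc.mpr ⟨?_, hxle⟩⟩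
        rw [hcs]; exact hbm
    · intro hxF
      intro k hk
      by_cases hek : ∃ j, ι j = k
      · obtain ⟨j, hj⟩ := hek
        subst hj
        rcases Finset.mem_union.mp hxF with h1 | h2
        · rcases Finset.mem_union.mp h1 with h3 | h4
          · -- x ≤ ι 0, but ι j < x : contradiction
            have hle : ι 0 ≤ ι j := hmono.monotone (Fin.zero_le j)
            exact absurd (lt_of_lt_of_le hk ((Finset.mem_Iic.mp h3).trans hle)) (lt_irrefl _)
          · obtain ⟨t, -, ht⟩ := Finset.mem_biUnion.mp h4
            rw [Finset.mem_Ioc] at ht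
            have hjlt : ι j < ι t.succ := lt_of_lt_of_le hk ht.2
            have hjs : j < t.succ := hmono.lt_iff_lt.mp hjlt
            have hjle : j ≤ t.castSucc := by
              have h1 := Fin.lt_def.mp hjs
              apply Fin.le_def.mpr
              simp only [Fin.val_succ] at h1
              simp only [Fin.coe_castSucc]
              omega
            calc π (ι j) ≤ π (ι t.castSucc) := hb.monotone hjle
              _ < x := ht.1
        · rw [Finset.mem_Ioi] at h2
          calc π (ι j) ≤ π (ι (Fin.last r)) := hb.monotone (Fin.le_last j)
            _ < x := h2
      · exact lt_of_le_of_lt (hnon k hek) hk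
  -- disjointness facts
  have hd1 : Disjoint (Finset.Iic (ι 0))
      (Finset.univ.biUnion (fun j : Fin r => Finset.Ioc (π (ι j.castSucc)) (ι j.succ))) := by
    rw [Finset.disjoint_left]
    intro y hy hy'
    obtain ⟨t, -, ht⟩ := Finset.mem_biUnion.mp hy'
    rw [Finset.mem_Ioc] at ht
    have h1 : ι 0 ≤ ι t.castSucc := hmono.monotone (Fin.zero_le _)
    have h2 : y ≤ ι 0 := Finset.mem_Iic.mp hy
    exact absurd (lt_of_le_of_lt (h2.trans (h1.trans (hexcι t.castSucc).le)) ht.1)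
      (lt_irrefl y)
  have hd2 : Disjoint (Finset.Iic (ι 0)
      ∪ Finset.univ.biUnion (fun j : Fin r => Finset.Ioc (π (ι j.castSucc)) (ι j.succ)))
      (Finset.Ioi (π (ι (Fin.last r)))) := by
    rw [Finset.disjoint_left]
    intro y hy hy'
    rw [Finset.mem_Ioi] at hy'
    rcases Finset.mem_union.mp hy with h3 | h4
    · have h2 : y ≤ ι 0 := Finset.mem_Iic.mp h3
      have h1 : ι 0 ≤ ι (Fin.last r) := hmono.monotone (Fin.zero_le _)
      exact absurd (lt_of_le_of_lt (h2.trans (h1.trans (hexcι _).le)) hy') (lt_irrefl y)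
    · obtain ⟨t, -, ht⟩ := Finset.mem_biUnion.mp h4
      rw [Finset.mem_Ioc] at ht
      have h1 : ι t.succ ≤ ι (Fin.last r) := hmono.monotone (Fin.le_last _)
      exact absurd (lt_of_le_of_lt (ht.2.trans (h1.trans (hexcι _).le)) hy') (lt_irrefl y)
  have hdb : ∀ j ∈ (Finset.univ : Finset (Fin r)), ∀ k ∈ (Finset.univ : Finset (Fin r)),
      j ≠ k → Disjoint (Finset.Ioc (π (ι j.castSucc)) (ι j.succ))
        (Finset.Ioc (π (ι k.castSucc)) (ι k.succ)) := by
    have key : ∀ j k : Fin r, j < k → Disjoint (Finset.Ioc (π (ι j.castSucc)) (ι j.succ))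
        (Finset.Ioc (π (ι k.castSucc)) (ι k.succ)) := by
      intro j k hjk
      rw [Finset.disjoint_left]
      intro y hy hy'
      rw [Finset.mem_Ioc] at hy hy'
      have h1 : j.succ ≤ k.castSucc := by
        apply Fin.le_def.mpr
        have := Fin.lt_def.mp hjk
        simp only [Fin.val_succ, Fin.coe_castSucc]
        omega
      have h2 : ι j.succ ≤ ι k.castSucc := hmono.monotone h1
      exact absurd (lt_of_le_of_lt (hy.2.trans (h2.trans (hexcι _).le)) hy'.1) (lt_irrefl y)
    intro j _ k _ hjk
    rcases lt_or_gt_of_ne hjk with h | h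
    · exact key j k h
    · exact (key k j h).symm
  -- compute the cardinality
  have hcount : Nat.card (ConnectivitySet π) = F.card := by
    rw [Nat.card_eq_fintype_card, ← Set.toFinset_card]
    congr 1
    ext x
    rw [Set.mem_toFinset]
    exact hmem x
  rw [hcount, hF]
  rw [Finset.card_union_of_disjoint hd2, Finset.card_union_of_disjoint hd1,
    Finset.card_biUnion hdb]
  have e1 : (Finset.Iic (ι 0)).card = (ι 0 : ℕ) + 1 := Fin.card_Iic _
  have e2 : ∀ j : Fin r, (Finset.Ioc (π (ι j.castSucc)) (ι j.succ)).card
      = (ι j.succ : ℕ) - (π (ι j.castSucc) : ℕ) := fun j => Fin.card_Ioc _ _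
  have e3 : (Finset.Ioi (π (ι (Fin.last r)))).card = n - ((π (ι (Fin.last r)) : ℕ) + 1) := by
    rw [Fin.card_Ioi]
    omega
  rw [e1, e3]
  congr 1
  congr 1
  exact Finset.sum_congr rfl fun j _ => e2 j
end

section
/- Let n ≥ 1 and let π be a 321-avoiding permutation of {1,…,n}. Let i < i' be two excedance locations of π such that no index strictly between i and i' is an excedance location. Then the number of elements x of the connectivity set of π with i < x ≤ i' equals max{i' − π(i), 0}. -/
/-!
Left of an excedance `i` all values are below `π i`: since `π` cannot map `[0, i]` into itself,
some `m > i` has `π m ≤ i`, and a `k < i` with `π k > π i` would give the 321 pattern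
`k < i < m`. Between `i` and `i'` there are no excedances, so `π k ≤ k` there. Hence for
`i < x ≤ i'`, `x` lies in the connectivity set exactly when `π i < x`.
-/

open Finset

theorem Equiv.Perm.exists_lt_and_apply_le_of_lt_apply {α : Type*} [LinearOrder α]
    [LocallyFiniteOrderBot α] (π : Equiv.Perm α) {i : α} (hi : i < π i) :
    ∃ m, i < m ∧ π m ≤ i := by
  by_contra! hno
  have hmaps : (Iic i).map π.symm.toEmbedding ⊆ Iic i := by
    intro m hm
    obtain ⟨v, hv, rfl⟩ := mem_map.mp hm
    simp only [mem_Iic] at hv ⊢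
    by_contra! hgt
    exact (hno _ hgt).not_ge (by simpa using hv)
  have hi_mem : i ∈ (Iic i).map π.symm.toEmbedding :=
    (eq_of_subset_of_card_le hmaps (card_map _).ge).symm ▸ mem_Iic.mpr le_rfl
  obtain ⟨v, hv, hvi⟩ := mem_map.mp hi_mem
  have hπi : π i = v := by simp [← hvi]
  exact hi.not_ge (hπi ▸ mem_Iic.mp hv)

variable {n : ℕ} {π : Equiv.Perm (Fin n)}

theorem Avoids321.apply_lt_apply_of_lt_of_lt_apply (h321 : Avoids321 π) {i k : Fin n}
    (hk : k < i) (hi : i < π i) : π k < π i := by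
  refine lt_of_le_of_ne ?_ (π.injective.ne hk.ne)
  by_contra! hgt
  obtain ⟨m, him, hm⟩ := π.exists_lt_and_apply_le_of_lt_apply hi
  exact h321 k i m hk him ⟨hm.trans_lt hi, hgt⟩

theorem Avoids321.mem_connectivitySet_of_apply_lt (h321 : Avoids321 π) {i x : Fin n}
    (hi : i < π i) (hno_exc : ∀ k, i < k → k < x → ¬ k < π k) (hx : π i < x) :
    x ∈ ConnectivitySet π := by
  intro k hk
  rcases lt_trichotomy k i with hki | rfl | hik
  · exact (h321.apply_lt_apply_of_lt_of_lt_apply hki hi).trans hx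
  · exact hx
  · exact (not_lt.mp (hno_exc k hik hk)).trans_lt hk

theorem stmt5_general (n : ℕ) (π : Equiv.Perm (Fin n)) (h321 : Avoids321 π)
    (i i' : Fin n) (hi : i < π i)
    (hbetween : ∀ x : Fin n, i < x → x < i' → ¬ x < π x) :
    Nat.card {x : Fin n // x ∈ ConnectivitySet π ∧ i < x ∧ x ≤ i'} =
      (i' : ℕ) - (π i : ℕ) := by
  have hmem : ∀ x, x ∈ ConnectivitySet π ∧ i < x ∧ x ≤ i' ↔ x ∈ Ioc (π i) i' := by
    intro x
    rw [mem_Ioc]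
    refine ⟨fun ⟨hc, hix, hxi'⟩ => ⟨hc i hix, hxi'⟩, fun ⟨hx, hxi'⟩ => ⟨?_, hi.trans hx, hxi'⟩⟩
    exact h321.mem_connectivitySet_of_apply_lt hi
      (fun k hik hkx => hbetween k hik (hkx.trans_le hxi')) hx
  rw [Nat.card_congr (Equiv.subtypeEquivRight hmem), Nat.card_eq_fintype_card,
    Fintype.card_coe, Fin.card_Ioc]

/-- Let `π` be a 321-avoiding permutation of `{1,…,n}` and let `i < i'` be two excedance
locations of `π` with no excedance location strictly between them.  Then the number of
elements `x` of the connectivity set of `π` with `i < x ≤ i'` equals `max{i' − π(i), 0}`.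
In the 0-based model `Fin n` the 1-based quantity `i' − π(i)` is `(i' : ℕ) - (π i : ℕ)`,
and truncated subtraction on `ℕ` realizes the `max{·, 0}`. -/
theorem stmt5 (n : ℕ) (hn : 1 ≤ n) (π : Equiv.Perm (Fin n)) (h321 : Avoids321 π)
    (i i' : Fin n) (hlt : i < i') (hi : i < π i) (hi' : i' < π i')
    (hbetween : ∀ x : Fin n, i < x → x < i' → ¬ x < π x) :
    Nat.card {x : Fin n // x ∈ ConnectivitySet π ∧ i < x ∧ x ≤ i'} =
      (i' : ℕ) - (π i : ℕ) :=
  stmt5_general n π h321 i i' hi hbetween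
end

section
/- For every n ≥ 0, the number of 321-avoiding permutations of {1,…,n} equals the n-th Catalan number C_n. -/
namespace List

variable {α β : Type*}

def Avoids321 [LT α] (l : List α) : Prop :=
  ∀ x y z, [x, y, z] <+ l → ¬(z < y ∧ y < x)

theorem Avoids321.sublist [LT α] {l₁ l₂ : List α} (h : l₁ <+ l₂) (h₂ : l₂.Avoids321) :
    l₁.Avoids321 :=
  fun x y z hs => h₂ x y z (hs.trans h)

theorem Pairwise.avoids321 [Preorder α] {l : List α} (h : l.Pairwise (· < ·)) :
    l.Avoids321 := by
  rintro x y z hs ⟨hzy, -⟩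
  have hyz : y < z := pairwise_iff_forall_sublist.mp h ((sublist_cons_self x [y, z]).trans hs)
  exact lt_asymm hyz hzy

theorem avoids321_map_iff_forall_sublist [LT β] {f : α → β} {l : List α} :
    (l.map f).Avoids321 ↔ ∀ a b c, [a, b, c] <+ l → ¬(f c < f b ∧ f b < f a) := by
  refine ⟨fun h a b c hs => h _ _ _ (hs.map f), fun h x y z hs => ?_⟩
  obtain ⟨l', hl', heq⟩ := sublist_map_iff.mp hs
  rcases l' with _ | ⟨a, _ | ⟨b, _ | ⟨c, _ | ⟨_, _⟩⟩⟩⟩ <;>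
    simp only [map_cons, map_nil, cons.injEq, reduceCtorEq, and_false] at heq
  obtain ⟨rfl, rfl, rfl, -⟩ := heq
  exact h a b c hl'

theorem avoids321_map_iff [LinearOrder α] [Preorder β] {f : α → β} (hf : StrictMono f)
    {l : List α} : (l.map f).Avoids321 ↔ l.Avoids321 := by
  rw [avoids321_map_iff_forall_sublist]
  simp only [hf.lt_iff_lt]
  rfl

/-- The minimum `a` can only play the role of the `1` of a `321`, so it forbids exactly the
descents of `t`. -/
theorem avoids321_append_cons_iff [LinearOrder α] {a : α} {t d : List α}
    (ht : ∀ x ∈ t, a < x) (hd : ∀ x ∈ d, a < x) :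
    (t ++ a :: d).Avoids321 ↔ (t ++ d).Avoids321 ∧ t.Pairwise (· ≤ ·) := by
  constructor
  · intro h
    refine ⟨h.sublist ((sublist_cons_self a d).append_left t), ?_⟩
    refine pairwise_iff_forall_sublist.mpr fun {x y} hxy => not_lt.mp fun hyx => ?_
    have hs : [x, y] ++ [a] <+ t ++ a :: d := hxy.append (singleton_sublist.mpr mem_cons_self)
    exact h x y a hs ⟨ht y (hxy.subset (by simp)), hyx⟩
  · rintro ⟨htd, hsorted⟩ x y z hs ⟨hzy, hyx⟩
    obtain ⟨r₁, r₂, heq, hr₁, hr₂⟩ := sublist_append_iff.mp hs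
    rcases sublist_cons_iff.mp hr₂ with hr₂ | ⟨r, rfl, hr⟩
    · exact htd x y z (heq ▸ hr₁.append hr₂) ⟨hzy, hyx⟩
    rcases r₁ with _ | ⟨x', _ | ⟨y', _ | ⟨z', r₁⟩⟩⟩ <;>
      simp only [nil_append, cons_append, cons.injEq] at heq
    · obtain ⟨rfl, rfl, -⟩ := heq
      exact lt_asymm hyx (hd y (hr.subset (by simp)))
    · obtain ⟨rfl, rfl, rfl, -⟩ := heq
      exact lt_asymm hzy (hd z (hr.subset (by simp)))
    · obtain ⟨rfl, rfl, rfl, -⟩ := heq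
      exact not_le.mpr hyx (pairwise_iff_forall_sublist.mp hsorted hr₁)
    · simp at heq

theorem take_append_cons_pairwise_lt_iff [Preorder α] {a : α} {t d : List α} {k : ℕ}
    (ht₀ : t ≠ []) (ht : ∀ x ∈ t, a < x) (hsorted : t.Pairwise (· < ·)) :
    ((t ++ a :: d).take k).Pairwise (· < ·) ↔ k ≤ t.length := by
  refine ⟨fun h => not_lt.mp fun hlt => ?_, fun hk => ?_⟩
  · obtain ⟨x, t', rfl⟩ := exists_cons_of_ne_nil ht₀
    obtain ⟨j, hj⟩ := Nat.exists_eq_add_of_lt hlt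
    rw [take_append, take_of_length_le hlt.le, hj, add_assoc, Nat.add_sub_cancel_left,
      take_succ_cons] at h
    exact lt_asymm (ht x mem_cons_self) ((pairwise_append.mp h).2.2 x mem_cons_self a (by simp))
  · rw [take_append_of_le_length hk]
    exact hsorted.sublist (take_sublist k t)

theorem avoids321_map_finRange_iff [Preorder α] {n : ℕ} (f : Fin n → α) :
    ((finRange n).map f).Avoids321 ↔
      ∀ i j k : Fin n, i < j → j < k → ¬(f k < f j ∧ f j < f i) := by
  have hsub : ∀ {i j k : Fin n}, [i, j, k] <+ finRange n ↔ i < j ∧ j < k := by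
    intro i j k
    constructor
    · intro h
      obtain ⟨⟨hij, -⟩, hjk⟩ := by simpa using (pairwise_lt_finRange n).sublist h
      exact ⟨hij, hjk⟩
    · rintro ⟨hij, hjk⟩
      have hlt : [i, j, k].SortedLT := Pairwise.sortedLT (by simp [hij, hjk, hij.trans hjk])
      exact sublist_of_subperm_of_sortedLE (subperm_of_subset hlt.nodup fun x _ => mem_finRange x)
        hlt.sortedLE (sortedLT_finRange n).sortedLE
  simp only [avoids321_map_iff_forall_sublist, hsub, and_imp]

end List

section CatalanOfPascal

open Finset

theorem Finset.Nat.sum_antidiagonal_sum_antidiagonal_snd {M : Type*} [AddCommMonoid M]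
    (f : ℕ → ℕ → ℕ → M) (d : ℕ) :
    ∑ p ∈ antidiagonal d, ∑ q ∈ antidiagonal p.2, f p.1 q.1 q.2 =
      ∑ p ∈ antidiagonal d, ∑ q ∈ antidiagonal p.1, f q.1 q.2 p.2 := by
  rw [sum_sigma', sum_sigma']
  refine sum_nbij' (fun x => ⟨(x.1.1 + x.2.1, x.2.2), (x.1.1, x.2.1)⟩)
    (fun x => ⟨(x.2.1, x.2.2 + x.1.2), (x.2.2, x.1.2)⟩) ?_ ?_ ?_ ?_ (fun _ _ => rfl)
  all_goals
    rintro ⟨⟨a, b⟩, c, e⟩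
    simp only [mem_sigma, HasAntidiagonal.mem_antidiagonal, Sigma.mk.injEq, Prod.mk.injEq,
      heq_eq_eq, and_true, true_and]
    omega

variable {F : ℕ → ℕ → ℕ}

theorem sum_antidiagonal_catalan_mul_of_pascal (diag : ∀ n, F n n = 1)
    (pascal : ∀ n m, m + 1 ≤ n → F (n + 1) (m + 1) = F n m + F (n + 1) (m + 2)) (d m : ℕ) :
    F (m + d + 1) (m + 1) = ∑ p ∈ antidiagonal d, catalan p.1 * F (m + p.2) m := by
  induction d using Nat.strong_induction_on generalizing m with
  | _ d ih =>
  rcases d with _ | d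
  · simp [diag]
  have hshift : F (m + 1 + d + 1) (m + 1 + 1) =
      ∑ p ∈ antidiagonal d, catalan (p.1 + 1) * F (m + p.2) m := by
    calc F (m + 1 + d + 1) (m + 1 + 1)
        = ∑ p ∈ antidiagonal d, catalan p.1 * F (m + 1 + p.2) (m + 1) :=
          ih d d.lt_succ_self (m + 1)
      _ = ∑ p ∈ antidiagonal d, ∑ q ∈ antidiagonal p.2,
            catalan p.1 * (catalan q.1 * F (m + q.2) m) := by
          refine sum_congr rfl fun p hp => ?_
          rw [HasAntidiagonal.mem_antidiagonal] at hp
          rw [add_right_comm, ih p.2 (by omega), mul_sum]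
      _ = ∑ p ∈ antidiagonal d, catalan (p.1 + 1) * F (m + p.2) m := by
          rw [Finset.Nat.sum_antidiagonal_sum_antidiagonal_snd
            (fun i a b => catalan i * (catalan a * F (m + b) m))]
          simp only [catalan_succ', sum_mul, mul_assoc]
  rw [← add_assoc, pascal (m + d + 1) m (by omega), Finset.Nat.sum_antidiagonal_succ,
    add_right_comm m, hshift]
  simp [add_right_comm, add_assoc]

theorem eq_catalan_of_pascal (diag : ∀ n, F n n = 1)
    (pascal : ∀ n m, m + 1 ≤ n → F (n + 1) (m + 1) = F n m + F (n + 1) (m + 2))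
    (zero_eq_one : ∀ n, F n 0 = F n 1) (n : ℕ) :
    F n 0 = catalan n := by
  induction n using Nat.strong_induction_on with
  | _ n ih =>
  rcases n with _ | n
  · simp [diag]
  have h := sum_antidiagonal_catalan_mul_of_pascal diag pascal n 0
  simp only [zero_add] at h
  rw [zero_eq_one, h, catalan_succ']
  refine sum_congr rfl fun p hp => ?_
  rw [HasAntidiagonal.mem_antidiagonal] at hp
  rw [ih p.2 (by omega)]

end CatalanOfPascal

section IncreasingPrefixAvoiders

open List

open scoped Classical in
noncomputable def increasingPrefixAvoiders (n k : ℕ) : Finset (List ℕ) :=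
  (range n).permutations.toFinset.filter fun l => l.Avoids321 ∧ (l.take k).Pairwise (· < ·)

variable {n m k : ℕ} {l t d : List ℕ}

theorem mem_increasingPrefixAvoiders :
    l ∈ increasingPrefixAvoiders n k ↔
      l ~ range n ∧ l.Avoids321 ∧ (l.take k).Pairwise (· < ·) := by
  simp [increasingPrefixAvoiders]

theorem increasingPrefixAvoiders_antitone (n : ℕ) : Antitone (increasingPrefixAvoiders n) := by
  intro k m h l
  simp only [mem_increasingPrefixAvoiders]
  exact fun ⟨hp, hav, hs⟩ => ⟨hp, hav, hs.sublist (take_sublist_take_left h)⟩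

theorem increasingPrefixAvoiders_self (n : ℕ) : increasingPrefixAvoiders n n = {range n} := by
  ext l
  simp only [mem_increasingPrefixAvoiders, Finset.mem_singleton]
  constructor
  · rintro ⟨hp, -, hs⟩
    rw [take_of_length_le (by simp [hp.length_eq])] at hs
    exact hp.eq_of_sortedLE hs.sortedLT.sortedLE (sortedLT_range n).sortedLE
  · rintro rfl
    rw [take_of_length_le (by simp)]
    exact ⟨Perm.refl _, pairwise_lt_range.avoids321, pairwise_lt_range⟩

theorem increasingPrefixAvoiders_zero (n : ℕ) :
    increasingPrefixAvoiders n 0 = increasingPrefixAvoiders n 1 := by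
  ext l
  simp only [mem_increasingPrefixAvoiders]
  rcases l with _ | ⟨a, l⟩ <;> simp

theorem pos_and_nodup_of_append_zero_cons_perm (hp : t ++ 0 :: d ~ range n) :
    (∀ x ∈ t ++ d, 0 < x) ∧ (t ++ d).Nodup := by
  obtain ⟨h0, hnd⟩ := nodup_cons.mp (nodup_middle.mp (hp.nodup_iff.mpr nodup_range))
  exact ⟨fun x hx => Nat.pos_of_ne_zero fun hx0 => h0 (hx0 ▸ hx), hnd⟩

theorem append_zero_cons_mem_iff (ht : t ≠ []) :
    t ++ 0 :: d ∈ increasingPrefixAvoiders n k ↔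
      t ++ 0 :: d ~ range n ∧ (t ++ d).Avoids321 ∧ t.Pairwise (· < ·) ∧ k ≤ t.length := by
  rw [mem_increasingPrefixAvoiders]
  refine and_congr_right fun hp => ?_
  obtain ⟨hpos, hnd⟩ := pos_and_nodup_of_append_zero_cons_perm hp
  have hpos_t : ∀ x ∈ t, 0 < x := fun x hx => hpos x (mem_append_left d hx)
  have hle_iff : t.Pairwise (· ≤ ·) ↔ t.Pairwise (· < ·) :=
    ⟨fun h => (h.and (hnd.sublist (sublist_append_left t d))).imp fun h => lt_of_le_of_ne h.1 h.2,
      fun h => h.imp le_of_lt⟩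
  rw [avoids321_append_cons_iff hpos_t fun x hx => hpos x (mem_append_right t hx), hle_iff,
    and_assoc]
  exact and_congr_right fun _ =>
    ⟨fun ⟨hs, htake⟩ => ⟨hs, (take_append_cons_pairwise_lt_iff ht hpos_t hs).mp htake⟩,
      fun ⟨hs, hk⟩ => ⟨hs, (take_append_cons_pairwise_lt_iff ht hpos_t hs).mpr hk⟩⟩

theorem zero_cons_mem_iff :
    0 :: d ∈ increasingPrefixAvoiders n (k + 1) ↔
      0 :: d ~ range n ∧ d.Avoids321 ∧ (d.take k).Pairwise (· < ·) := by
  rw [mem_increasingPrefixAvoiders]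
  refine and_congr_right fun hp => ?_
  have hpos := (pos_and_nodup_of_append_zero_cons_perm (t := []) hp).1
  have hav := avoids321_append_cons_iff (t := []) (by simp) hpos
  simp only [nil_append, Pairwise.nil, and_true] at hav
  rw [hav, take_succ_cons, pairwise_cons]
  exact and_congr_right fun _ =>
    and_iff_right_of_imp fun _ y hy => hpos y (by simpa using (take_subset k d) hy)

theorem zero_cons_map_succ_mem_iff :
    0 :: l.map Nat.succ ∈ increasingPrefixAvoiders (n + 1) (m + 1) ↔
      l ∈ increasingPrefixAvoiders n m := by
  rw [zero_cons_mem_iff, mem_increasingPrefixAvoiders, range_succ_eq_map, perm_cons,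
    map_perm_map_iff Nat.succ_injective,
    avoids321_map_iff fun _ _ h => Nat.succ_lt_succ h, ← map_take, pairwise_map]
  simp only [Nat.succ_lt_succ_iff]

theorem filter_head?_eq_zero :
    (increasingPrefixAvoiders (n + 1) (m + 1)).filter (·.head? = some 0) =
      (increasingPrefixAvoiders n m).map ⟨fun l => 0 :: l.map Nat.succ, fun _ _ h =>
        (map_injective_iff.mpr Nat.succ_injective) (cons_injective h)⟩ := by
  ext l
  simp only [Finset.mem_filter, Finset.mem_map]
  constructor
  · rintro ⟨hl, hhead⟩
    obtain ⟨d, rfl⟩ : ∃ d, l = 0 :: d := ⟨l.tail, eq_cons_of_mem_head? hhead⟩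
    have hpos := (pos_and_nodup_of_append_zero_cons_perm (t := [])
      (mem_increasingPrefixAvoiders.mp hl).1).1
    have hd : (d.map Nat.pred).map Nat.succ = d := by
      rw [map_map]
      exact (map_congr_left fun x hx => Nat.succ_pred_eq_of_pos (hpos x hx)).trans (map_id d)
    refine ⟨d.map Nat.pred, ?_, congrArg (cons 0) hd⟩
    rwa [← zero_cons_map_succ_mem_iff, hd]
  · rintro ⟨l, hl, rfl⟩
    exact ⟨zero_cons_map_succ_mem_iff.mpr hl, rfl⟩

theorem append_zero_cons_mem_iff_zero_cons_append_mem (ht : t.length = m + 1) :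
    t ++ 0 :: d ∈ increasingPrefixAvoiders n (m + 1) ↔
      0 :: (t ++ d) ∈ increasingPrefixAvoiders n (m + 2) := by
  rw [append_zero_cons_mem_iff (ne_nil_of_length_eq_add_one ht), zero_cons_mem_iff,
    take_left' ht, ht]
  simp only [le_refl, and_true]
  exact and_congr_left fun _ => ⟨perm_middle.symm.trans, perm_middle.trans⟩

theorem exists_eq_append_zero_cons_of_notMem
    (hl : l ∈ increasingPrefixAvoiders (n + 1) (m + 1)) (hhead : ¬l.head? = some 0)
    (hnot : l ∉ increasingPrefixAvoiders (n + 1) (m + 2)) :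
    ∃ t d, l = t ++ 0 :: d ∧ t.length = m + 1 ∧ 0 ∉ t := by
  obtain ⟨t, d, rfl⟩ : ∃ t d, l = t ++ 0 :: d := append_of_mem
    ((mem_increasingPrefixAvoiders.mp hl).1.mem_iff.mpr (mem_range.mpr n.succ_pos))
  have ht : t ≠ [] := by rintro rfl; exact hhead rfl
  obtain ⟨hp, hav, hs, hk⟩ := (append_zero_cons_mem_iff ht).mp hl
  have hlen : ¬m + 2 ≤ t.length := fun h =>
    hnot ((append_zero_cons_mem_iff ht).mpr ⟨hp, hav, hs, h⟩)
  have hpos := (pos_and_nodup_of_append_zero_cons_perm hp).1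
  exact ⟨t, d, rfl, by omega, fun h0 => lt_irrefl 0 (hpos 0 (mem_append_left d h0))⟩

theorem length_take_and_zero_notMem_take (hp : 0 :: d ~ range (n + 1)) (hmn : m + 1 ≤ n) :
    (d.take (m + 1)).length = m + 1 ∧ 0 ∉ d.take (m + 1) := by
  have hlen : d.length = n := by simpa using hp.length_eq
  refine ⟨by simp [hlen, hmn], fun h0 => ?_⟩
  exact lt_irrefl 0 ((pos_and_nodup_of_append_zero_cons_perm (t := []) hp).1 0 (take_subset _ _ h0))

/-- The lists on the left are those with `0` at position `m + 1`; moving it to the front is the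
bijection. -/
theorem card_filter_notMem_eq_card_filter_head?_eq_zero (hmn : m + 1 ≤ n) :
    (((increasingPrefixAvoiders (n + 1) (m + 1)).filter (¬·.head? = some 0)).filter
        (· ∉ increasingPrefixAvoiders (n + 1) (m + 2))).card =
      ((increasingPrefixAvoiders (n + 1) (m + 2)).filter (·.head? = some 0)).card := by
  refine Finset.card_nbij' (fun l => 0 :: l.erase 0)
    (fun l => l.tail.take (m + 1) ++ 0 :: l.tail.drop (m + 1)) ?_ ?_ ?_ ?_
  · intro l hl
    simp only [Finset.mem_coe, Finset.mem_filter] at hl ⊢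
    obtain ⟨t, d, rfl, ht, h0⟩ := exists_eq_append_zero_cons_of_notMem hl.1.1 hl.1.2 hl.2
    rw [erase_append_right _ h0, erase_cons_head]
    exact ⟨(append_zero_cons_mem_iff_zero_cons_append_mem ht).mp hl.1.1, rfl⟩
  · intro l hl
    simp only [Finset.mem_coe, Finset.mem_filter] at hl ⊢
    obtain ⟨d, rfl⟩ : ∃ d, l = 0 :: d := ⟨l.tail, eq_cons_of_mem_head? hl.2⟩
    obtain ⟨hlen, h0⟩ :=
      length_take_and_zero_notMem_take (mem_increasingPrefixAvoiders.mp hl.1).1 hmn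
    have ht := ne_nil_of_length_eq_add_one hlen
    dsimp only [tail_cons]
    refine ⟨⟨(append_zero_cons_mem_iff_zero_cons_append_mem hlen).mpr
      (by rw [take_append_drop]; exact hl.1), ?_⟩, fun h => ?_⟩
    · rw [head?_append_of_ne_nil _ ht]
      exact fun h => h0 (mem_of_mem_head? h)
    · have := ((append_zero_cons_mem_iff ht).mp h).2.2.2
      omega
  · intro l hl
    simp only [Finset.mem_coe, Finset.mem_filter] at hl
    obtain ⟨t, d, rfl, ht, h0⟩ := exists_eq_append_zero_cons_of_notMem hl.1.1 hl.1.2 hl.2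
    dsimp only
    rw [erase_append_right _ h0, erase_cons_head, tail_cons, take_left' ht, drop_left' ht]
  · intro l hl
    simp only [Finset.mem_coe, Finset.mem_filter] at hl
    obtain ⟨d, rfl⟩ : ∃ d, l = 0 :: d := ⟨l.tail, eq_cons_of_mem_head? hl.2⟩
    obtain ⟨-, h0⟩ :=
      length_take_and_zero_notMem_take (mem_increasingPrefixAvoiders.mp hl.1).1 hmn
    dsimp only [tail_cons]
    rw [erase_append_right _ h0, erase_cons_head, take_append_drop]

theorem card_increasingPrefixAvoiders_succ_succ (hmn : m + 1 ≤ n) :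
    (increasingPrefixAvoiders (n + 1) (m + 1)).card =
      (increasingPrefixAvoiders n m).card + (increasingPrefixAvoiders (n + 1) (m + 2)).card := by
  have hA := Finset.card_filter_add_card_filter_not
    (s := increasingPrefixAvoiders (n + 1) (m + 1)) (·.head? = some 0)
  have hB := Finset.card_filter_add_card_filter_not
    (s := increasingPrefixAvoiders (n + 1) (m + 2)) (·.head? = some 0)
  have hA' := Finset.card_filter_add_card_filter_not
    (s := (increasingPrefixAvoiders (n + 1) (m + 1)).filter (¬·.head? = some 0))
    (· ∈ increasingPrefixAvoiders (n + 1) (m + 2))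
  have hBA : ((increasingPrefixAvoiders (n + 1) (m + 1)).filter (¬·.head? = some 0)).filter
      (· ∈ increasingPrefixAvoiders (n + 1) (m + 2)) =
        (increasingPrefixAvoiders (n + 1) (m + 2)).filter (¬·.head? = some 0) := by
    ext l
    simp only [Finset.mem_filter]
    exact ⟨fun h => ⟨h.2, h.1.2⟩,
      fun h => ⟨⟨increasingPrefixAvoiders_antitone _ (by omega) h.1, h.2⟩, h.1⟩⟩
  rw [filter_head?_eq_zero, Finset.card_map] at hA
  rw [hBA, card_filter_notMem_eq_card_filter_head?_eq_zero hmn] at hA'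
  omega

end IncreasingPrefixAvoiders

section PermutationsAsLists

open List

theorem Equiv.Perm.ofFn_val_perm_range {n : ℕ} (π : Equiv.Perm (Fin n)) :
    ofFn (fun i => (π i : ℕ)) ~ range n :=
  (π.ofFn_comp_perm Fin.val).trans (by rw [ofFn_eq_map, map_coe_finRange_eq_range])

theorem avoids321_iff_avoids321_ofFn_val {n : ℕ} (π : Equiv.Perm (Fin n)) :
    Avoids321 π ↔ (ofFn fun i => (π i : ℕ)).Avoids321 := by
  rw [ofFn_eq_map, show (fun i => (π i : ℕ)) = Fin.val ∘ π from rfl, ← map_map,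
    avoids321_map_iff Fin.val_strictMono, avoids321_map_finRange_iff]
  rfl

theorem List.Perm.exists_ofFn_val_eq {n : ℕ} {l : List ℕ} (hp : l ~ range n) :
    ∃ π : Equiv.Perm (Fin n), ofFn (fun i => (π i : ℕ)) = l := by
  have hlen : l.length = n := by simpa using hp.length_eq
  have hlt : ∀ i : Fin n, l[i] < n := fun i => mem_range.mp (hp.subset (getElem_mem _))
  have hinj : Function.Injective fun i : Fin n => (⟨l[i], hlt i⟩ : Fin n) := fun i j h =>
    Fin.ext ((hp.nodup_iff.mpr nodup_range).getElem_inj_iff.mp (congrArg Fin.val h))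
  exact ⟨Equiv.ofBijective _ (Finite.injective_iff_bijective.mp hinj),
    ext_getElem (by simp [hlen]) fun i _ _ => by simp⟩

theorem card_avoids321_eq_card_increasingPrefixAvoiders (n : ℕ) :
    Nat.card {π : Equiv.Perm (Fin n) // Avoids321 π} = (increasingPrefixAvoiders n 0).card := by
  classical
  have hinj : Function.Injective fun π : Equiv.Perm (Fin n) => ofFn fun i => (π i : ℕ) :=
    fun π σ h => Equiv.ext fun i => Fin.ext (congrFun (ofFn_injective h) i)
  rw [Nat.card_eq_fintype_card, Fintype.card_subtype, ← Finset.card_image_of_injective _ hinj]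
  congr 1
  ext l
  simp only [Finset.mem_image, Finset.mem_filter, Finset.mem_univ, true_and,
    mem_increasingPrefixAvoiders, take_zero, Pairwise.nil, and_true]
  constructor
  · rintro ⟨π, hπ, rfl⟩
    exact ⟨π.ofFn_val_perm_range, (avoids321_iff_avoids321_ofFn_val π).mp hπ⟩
  · rintro ⟨hp, hav⟩
    obtain ⟨π, rfl⟩ := hp.exists_ofFn_val_eq
    exact ⟨π, (avoids321_iff_avoids321_ofFn_val π).mpr hav, rfl⟩

end PermutationsAsLists

/-- For every `n ≥ 0`, the number of 321-avoiding permutations of `{1,…,n}` equals the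
`n`-th Catalan number. -/
theorem stmt12 (n : ℕ) :
    Nat.card {π : Equiv.Perm (Fin n) // Avoids321 π} = catalan n := by
  rw [card_avoids321_eq_card_increasingPrefixAvoiders]
  exact eq_catalan_of_pascal (F := fun n k => (increasingPrefixAvoiders n k).card)
    (fun n => by simp [increasingPrefixAvoiders_self])
    (fun n m hmn => card_increasingPrefixAvoiders_succ_succ hmn)
    (fun n => by rw [increasingPrefixAvoiders_zero]) n
end

section
/- Let n ≥ 1 and let π be a 321-avoiding permutation of {1,…,n} which is not the identity, with excedance locations i_1 < i_2 < ⋯ < i_r. If for some j with 2 ≤ j ≤ r one has π(i_{j−1}) ≥ i_j, then π(x) < x for every index x with i_{j−1} < x < i_j; in particular π has no fixed point strictly between i_{j−1} and i_j. -/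
theorem Equiv.Perm.exists_le_apply_lt_of_lt_of_le_apply {α : Type*} [LinearOrder α]
    [Fintype α] (σ : Equiv.Perm α) {i x : α}
    (hi : i < x) (hx : x ≤ σ i) : ∃ k, x ≤ k ∧ σ k < x := by
  by_contra! hnone
  let below : Finset α := Finset.univ.filter (· < x)
  have hmaps : below.map σ.symm.toEmbedding ⊆ below := by
    intro k hk
    simp only [below, Finset.mem_map_equiv, Equiv.symm_symm, Finset.mem_filter,
      Finset.mem_univ, true_and] at hk ⊢
    exact lt_of_not_ge fun hxk => (hnone k hxk).not_gt hk
  have hsurj : below.map σ.symm.toEmbedding = below :=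
    Finset.eq_of_subset_of_card_le hmaps (Finset.card_map _).ge
  have hiσ : i ∈ below.map σ.symm.toEmbedding := by
    rw [hsurj]; simpa [below] using hi
  simp only [below, Finset.mem_map_equiv, Equiv.symm_symm, Finset.mem_filter,
    Finset.mem_univ, true_and] at hiσ
  exact hx.not_gt hiσ

theorem Avoids321.apply_lt_of_lt_of_apply_eq {n : ℕ} {π : Equiv.Perm (Fin n)}
    (h321 : Avoids321 π) {i x : Fin n} (hix : i < x) (hfix : π x = x) : π i < x := by
  by_contra! hxi
  have hxi' : x < π i := hxi.lt_of_ne fun h => hix.ne (π.injective (hfix.trans h)).symm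
  obtain ⟨k, hxk, hk⟩ := π.exists_le_apply_lt_of_lt_of_le_apply hix hxi
  have hxk' : x < k := hxk.lt_of_ne fun h => hk.ne (h ▸ hfix)
  exact h321 i x k hix hxk' ⟨hfix.symm ▸ hk, hfix.symm ▸ hxi'⟩

theorem StrictMono.apply_ne_of_castSucc_lt_of_lt_succ {α : Type*} [Preorder α] {r : ℕ}
    {ι : Fin (r + 1) → α} (hmono : StrictMono ι) {j : Fin r} {x : α}
    (h1 : ι j.castSucc < x) (h2 : x < ι j.succ) (k : Fin (r + 1)) : ι k ≠ x := by
  rintro rfl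
  have hk : j.succ ≤ k := Fin.castSucc_lt_iff_succ_le.mp (hmono.lt_iff_lt.mp h1)
  exact (hmono.monotone hk).not_gt h2

theorem stmt13_general (n r : ℕ) (π : Equiv.Perm (Fin n)) (h321 : Avoids321 π)
    (ι : Fin (r + 1) → Fin n) (hmono : StrictMono ι)
    (hexc : ∀ x : Fin n, x < π x ↔ ∃ j, ι j = x)
    (j : Fin r) (hj : ι j.succ ≤ π (ι j.castSucc)) :
    (∀ x : Fin n, ι j.castSucc < x → x < ι j.succ → π x < x) ∧
    (∀ x : Fin n, ι j.castSucc < x → x < ι j.succ → π x ≠ x) := by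
  have hdesc : ∀ x : Fin n, ι j.castSucc < x → x < ι j.succ → π x < x := by
    intro x h1 h2
    have hle : π x ≤ x := not_lt.mp fun hx =>
      let ⟨k, hk⟩ := (hexc x).mp hx
      hmono.apply_ne_of_castSucc_lt_of_lt_succ h1 h2 k hk
    refine hle.lt_of_ne fun hfix => ?_
    have hbelow := h321.apply_lt_of_lt_of_apply_eq h1 hfix
    exact (h2.trans_le hj).not_gt hbelow
  exact ⟨hdesc, fun x h1 h2 => (hdesc x h1 h2).ne⟩

/-- Let `π` be a 321-avoiding permutation of `{1,…,n}` (so `1 ≤ n`), not the identity, with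
excedance locations `i_1 < ⋯ < i_{r+1}` (here `ι 0, …, ι (Fin.last r)`).  If for some `j`
the consecutive excedance locations `i_{j−1} = ι j.castSucc` and `i_j = ι j.succ` satisfy
`π(i_{j−1}) ≥ i_j`, then `π x < x` for every index `x` with `i_{j−1} < x < i_j`; in
particular `π` has no fixed point strictly between `i_{j−1}` and `i_j`. -/
theorem stmt13 (n r : ℕ) (hn : 1 ≤ n) (π : Equiv.Perm (Fin n)) (h321 : Avoids321 π)
    (hne : π ≠ 1)
    (ι : Fin (r + 1) → Fin n) (hmono : StrictMono ι)
    (hexc : ∀ x : Fin n, x < π x ↔ ∃ j, ι j = x)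
    (j : Fin r) (hj : ι j.succ ≤ π (ι j.castSucc)) :
    (∀ x : Fin n, ι j.castSucc < x → x < ι j.succ → π x < x) ∧
    (∀ x : Fin n, ι j.castSucc < x → x < ι j.succ → π x ≠ x) :=
  stmt13_general n r π h321 ι hmono hexc j hj
end

section
/- Let n ≥ 1 and let π be a 321-avoiding permutation of {1,…,n} which is not the identity, with excedance locations i_1 < i_2 < ⋯ < i_r. If for some j with 2 ≤ j ≤ r one has π(i_{j−1}) < i_j, then π(x) = x for every index x with π(i_{j−1}) < x < i_j. -/
theorem Equiv.Perm.exists_lt_le_apply_of_apply_lt {α : Type*} [LinearOrder α]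
    [LocallyFiniteOrderBot α] (π : Equiv.Perm α) {x : α} (hx : π x < x) :
    ∃ p < x, x ≤ π p := by
  by_contra! h
  have hcard : (Finset.Iic x).card ≤ (Finset.Iio x).card := by
    refine Finset.card_le_card_of_injOn π (fun z hz => ?_) π.injective.injOn
    simp only [Finset.coe_Iic, Set.mem_Iic, Finset.coe_Iio, Set.mem_Iio] at hz ⊢
    rcases hz.lt_or_eq with hz | rfl
    exacts [h z hz, hx]
  rw [Finset.Iic_eq_cons_Iio, Finset.card_cons] at hcard
  omega

theorem StrictMono.not_lt_and_lt_succ {α : Type*} [Preorder α] {r : ℕ} {ι : Fin (r + 1) → α}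
    (hι : StrictMono ι) (j : Fin r) (k : Fin (r + 1)) :
    ¬(ι j.castSucc < ι k ∧ ι k < ι j.succ) := by
  rintro ⟨h₁, h₂⟩
  rw [hι.lt_iff_lt, Fin.castSucc_lt_iff_succ_le] at h₁
  exact (hι.lt_iff_lt.mp h₂).not_ge h₁

theorem Avoids321.apply_eq_self_of_no_excedance_between {n : ℕ} {π : Equiv.Perm (Fin n)}
    (h321 : Avoids321 π) {a b : Fin n} (ha : a < π a)
    (hgap : ∀ z, a < z → z < b → π z ≤ z) :
    ∀ x, π a < x → x < b → π x = x := by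
  intro x
  induction x using WellFoundedLT.induction with
  | ind x ih =>
  intro hax hxb
  have hxa : a < x := ha.trans hax
  refine (hgap x hxa hxb).eq_or_lt.resolve_right fun hlt => ?_
  obtain ⟨p, hpx, hxp⟩ := π.exists_lt_le_apply_of_apply_lt hlt
  have hπx : π x < π a := by
    refine lt_of_le_of_ne (not_lt.mp fun h => hlt.ne ?_) (π.injective.ne hxa.ne')
    exact π.injective (ih (π x) hlt h (hlt.trans hxb))
  have hpa : p < a := by
    refine lt_of_not_ge fun hap => ?_
    rcases hap.eq_or_lt with rfl | hap
    · exact (hax.trans_le hxp).false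
    · exact (hgap p hap (hpx.trans hxb)).not_gt (hpx.trans_le hxp)
  exact h321 p a x hpa hxa ⟨hπx, hax.trans_le hxp⟩

theorem stmt14_general (n r : ℕ) (π : Equiv.Perm (Fin n)) (h321 : Avoids321 π)
    (ι : Fin (r + 1) → Fin n) (hmono : StrictMono ι)
    (hexc : ∀ x : Fin n, x < π x ↔ ∃ j, ι j = x)
    (j : Fin r) :
    ∀ x : Fin n, π (ι j.castSucc) < x → x < ι j.succ → π x = x := by
  refine h321.apply_eq_self_of_no_excedance_between ((hexc _).mpr ⟨_, rfl⟩) fun z h₁ h₂ => ?_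
  refine not_lt.mp fun hz => ?_
  obtain ⟨k, rfl⟩ := (hexc z).mp hz
  exact hmono.not_lt_and_lt_succ j k ⟨h₁, h₂⟩

/-- Let `π` be a 321-avoiding permutation of `{1,…,n}` (so `1 ≤ n`), not the identity, with
excedance locations `i_1 < ⋯ < i_{r+1}` (here `ι 0, …, ι (Fin.last r)`).  If for some `j`
the consecutive excedance locations `i_{j−1} = ι j.castSucc` and `i_j = ι j.succ` satisfy
`π(i_{j−1}) < i_j`, then `π x = x` for every index `x` with `π(i_{j−1}) < x < i_j`. -/
theorem stmt14 (n r : ℕ) (hn : 1 ≤ n) (π : Equiv.Perm (Fin n)) (h321 : Avoids321 π)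
    (hne : π ≠ 1)
    (ι : Fin (r + 1) → Fin n) (hmono : StrictMono ι)
    (hexc : ∀ x : Fin n, x < π x ↔ ∃ j, ι j = x)
    (j : Fin r) (hj : π (ι j.castSucc) < ι j.succ) :
    ∀ x : Fin n, π (ι j.castSucc) < x → x < ι j.succ → π x = x :=
  stmt14_general n r π h321 ι hmono hexc j
end
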